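/- Let K ≥ 3, T ≥ 1, σ > 0, τ ∈ ℝ, and let Δ ∈ ℝ^K with Δ_k > 0 for all k be such that there exists a nondecreasing real sequence (m_k)_{k=1}^K with |m_k − τ| = Δ_k for every k ∈ [K]. Then for every fixed-budget strategy π with horizon T there exists a bandit problem ν whose arms are Gaussian measures on ℝ with variance σ², whose means (μ_k)_{k=1}^K are nondecreasing and satisfy |μ_k − τ| = Δ_k for every k, such that the probability of error satisfies e_T^{ν,π} ≥ (1/4)·exp(−T·Δ_min²/σ²), where Δ_min = min_{k∈[K]} Δ_k. -/

import Mathlib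

open MeasureTheory ProbabilityTheory

/-- Law of the history `(Y_1, …, Y_n)` of a fixed-budget strategy: at round `t + 1`, given
the past history `h : Fin t → ℝ`, the sampling rule `π` selects the arm `π t h` and the
observation is drawn from `ν (π t h)` (sequential / Ionescu–Tulcea composition). -/
noncomputable def histMeasure {K : ℕ} (ν : Fin K → Measure ℝ)
    (π : (t : ℕ) → (Fin t → ℝ) → Fin K) : (n : ℕ) → Measure (Fin n → ℝ)
  | 0 => Measure.dirac (fun i => Fin.elim0 i)
  | n + 1 => (histMeasure ν π n).bind (fun h => (ν (π n h)).map (Fin.snoc h))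

/-- The error event: some arm is misclassified. `Qhat y k = true` encodes the label `+1`
(i.e. the prediction that `μ k ≥ τ`), `false` encodes the label `-1`. -/
def errSet {K T : ℕ} (Qhat : (Fin T → ℝ) → Fin K → Bool) (μ : Fin K → ℝ) (τ : ℝ) :
    Set (Fin T → ℝ) :=
  {y | ∃ k, (Qhat y k = true) ≠ (τ ≤ μ k)}

/-!
Among the arms of minimal gap `δ = Δ_min`, take the last one below `τ` (or the first one above
`τ`), say `j`. No mean lies strictly between `τ - δ` and `τ + δ`, so placing `μ_j` at `τ + δ` or
at `τ - δ` gives two monotone problems with the prescribed gaps that differ only in arm `j`, whose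
label they disagree on. Relative to the problem with `μ_j = τ`, their history likelihood ratios
`L₊, L₋` satisfy `L₊ L₋ = exp (-N_j δ² / σ²) ≥ exp (-T δ² / σ²)`, where `N_j` is the number of
pulls of arm `j`. By Cauchy–Schwarz, `(∫ √(L₊ L₋))² ≤ 2 ∫ min L₊ L₋`, and `∫ min L₊ L₋` bounds
the sum of the two error probabilities of the test `Q̂_j`, so one of them is at least
`exp (-T δ² / σ²) / 4`.
-/

open scoped ENNReal NNReal

lemma measurable_apply_self {ι α β : Type*} [Countable ι] [MeasurableSpace ι]
    [MeasurableSingletonClass ι] [MeasurableSpace α] [MeasurableSpace β]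
    {g : α → ι} (hg : Measurable g) {F : ι → α → β} (hF : ∀ i, Measurable (F i)) :
    Measurable fun a => F (g a) a :=
  (measurable_from_prod_countable_left (f := fun p : α × ι => F p.2 p.1) hF).comp
    (measurable_id.prodMk hg)

lemma measurable_snoc_uncurry {n : ℕ} :
    Measurable fun p : (Fin n → ℝ) × ℝ => (Fin.snoc p.1 p.2 : Fin (n + 1) → ℝ) := by
  refine measurable_pi_lambda _ fun i => ?_
  induction i using Fin.lastCases with
  | last => simpa only [Fin.snoc_last] using measurable_snd
  | cast s => simp only [Fin.snoc_castSucc]; exact (measurable_pi_apply s).comp measurable_fst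

lemma measurable_snoc {n : ℕ} (h : Fin n → ℝ) :
    Measurable (Fin.snoc (α := fun _ => ℝ) h) :=
  measurable_snoc_uncurry.comp measurable_prodMk_left

lemma measurable_map_snoc {ι : Type*} [Countable ι] [MeasurableSpace ι]
    [MeasurableSingletonClass ι] {n : ℕ} (ν : ι → Measure ℝ) [∀ i, SFinite (ν i)]
    {f : (Fin n → ℝ) → ι} (hf : Measurable f) :
    Measurable fun h : Fin n → ℝ => (ν (f h)).map (Fin.snoc (α := fun _ => ℝ) h) := by
  refine measurable_apply_self (F := fun i h => (ν i).map (Fin.snoc (α := fun _ => ℝ) h)) hf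
    fun i => Measure.measurable_measure.2 fun s hs => ?_
  simp_rw [Measure.map_apply (measurable_snoc _) hs]
  exact measurable_measure_prodMk_left (measurable_snoc_uncurry hs)

section histMeasure

variable {K : ℕ} (ν : Fin K → Measure ℝ) (π : (t : ℕ) → (Fin t → ℝ) → Fin K)

lemma histMeasure_succ (n : ℕ) :
    histMeasure ν π (n + 1) = (histMeasure ν π n).bind fun h => (ν (π n h)).map (Fin.snoc h) :=
  rfl

variable {π}

lemma isProbabilityMeasure_histMeasure [∀ k, IsProbabilityMeasure (ν k)]
    (hπ : ∀ t, Measurable (π t)) :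
    ∀ n, IsProbabilityMeasure (histMeasure ν π n)
  | 0 => by rw [histMeasure]; infer_instance
  | n + 1 => by
    have := isProbabilityMeasure_histMeasure hπ n
    constructor
    rw [histMeasure_succ, Measure.bind_apply .univ (measurable_map_snoc ν (hπ n)).aemeasurable]
    simp [Measure.map_apply (measurable_snoc _) .univ]

lemma lintegral_histMeasure_succ [∀ k, SFinite (ν k)] (hπ : ∀ t, Measurable (π t)) (n : ℕ)
    {f : (Fin (n + 1) → ℝ) → ℝ≥0∞} (hf : Measurable f) :
    ∫⁻ y, f y ∂histMeasure ν π (n + 1)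
      = ∫⁻ h, ∫⁻ x, f (Fin.snoc h x) ∂ν (π n h) ∂histMeasure ν π n := by
  rw [histMeasure_succ, Measure.lintegral_bind (measurable_map_snoc ν (hπ n)).aemeasurable
    hf.aemeasurable]
  exact lintegral_congr fun h => lintegral_map hf (measurable_snoc h)

end histMeasure

noncomputable def histLikelihood {K : ℕ} (r : Fin K → ℝ → ℝ≥0∞)
    (π : (t : ℕ) → (Fin t → ℝ) → Fin K) : (n : ℕ) → (Fin n → ℝ) → ℝ≥0∞
  | 0 => fun _ => 1
  | n + 1 => fun y => histLikelihood r π n (Fin.init y) * r (π n (Fin.init y)) (y (Fin.last n))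

section histLikelihood

variable {K : ℕ} (r : Fin K → ℝ → ℝ≥0∞) (π : (t : ℕ) → (Fin t → ℝ) → Fin K)

lemma histLikelihood_snoc (n : ℕ) (h : Fin n → ℝ) (x : ℝ) :
    histLikelihood r π (n + 1) (Fin.snoc h x) = histLikelihood r π n h * r (π n h) x := by
  simp only [histLikelihood, Fin.init_snoc, Fin.snoc_last]

lemma pow_le_histLikelihood_mul {r' : Fin K → ℝ → ℝ≥0∞} {c : ℝ≥0∞}
    (hc : ∀ k x, c ≤ r k x * r' k x) :
    ∀ n (y : Fin n → ℝ), c ^ n ≤ histLikelihood r π n y * histLikelihood r' π n y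
  | 0, _ => by simp [histLikelihood]
  | n + 1, y => by
    rw [pow_succ, histLikelihood, histLikelihood, mul_mul_mul_comm]
    exact mul_le_mul' (pow_le_histLikelihood_mul hc n _) (hc _ _)

variable {π}

lemma measurable_histLikelihood (hπ : ∀ t, Measurable (π t)) (hr : ∀ k, Measurable (r k)) :
    ∀ n, Measurable (histLikelihood r π n)
  | 0 => measurable_const
  | n + 1 => by
    have hinit : Measurable (Fin.init : (Fin (n + 1) → ℝ) → Fin n → ℝ) :=
      measurable_pi_lambda _ fun _ => measurable_pi_apply _
    exact ((measurable_histLikelihood hπ hr n).comp hinit).mul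
      (measurable_apply_self (F := fun k y => r k (y (Fin.last n))) ((hπ n).comp hinit)
        fun k => (hr k).comp (measurable_pi_apply _))

lemma histMeasure_withDensity (hπ : ∀ t, Measurable (π t)) (ν : Fin K → Measure ℝ)
    [∀ k, SFinite (ν k)] (hr : ∀ k, Measurable (r k)) :
    ∀ n, histMeasure (fun k => (ν k).withDensity (r k)) π n
      = (histMeasure ν π n).withDensity (histLikelihood r π n)
  | 0 => by simp [histMeasure, histLikelihood]
  | n + 1 => by
    refine Measure.ext_of_lintegral _ fun f hf => ?_
    have hinner : Measurable fun h : Fin n → ℝ =>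
        ∫⁻ x, r (π n h) x * f (Fin.snoc h x) ∂ν (π n h) :=
      measurable_apply_self (F := fun k h => ∫⁻ x, r k x * f (Fin.snoc h x) ∂ν k) (hπ n) fun k =>
        (((hr k).comp measurable_snd).mul (hf.comp measurable_snoc_uncurry)).lintegral_prod_right'
    have hL := measurable_histLikelihood r hπ hr
    rw [lintegral_histMeasure_succ _ hπ _ hf, histMeasure_withDensity hπ ν hr n,
      lintegral_withDensity_eq_lintegral_mul _ (hL (n + 1)) hf,
      lintegral_histMeasure_succ _ hπ _ ((hL (n + 1)).mul hf)]
    have hkernel : ∀ h : Fin n → ℝ, ∫⁻ x, f (Fin.snoc h x) ∂(ν (π n h)).withDensity (r (π n h))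
        = ∫⁻ x, r (π n h) x * f (Fin.snoc h x) ∂ν (π n h) := fun h =>
      lintegral_withDensity_eq_lintegral_mul _ (hr _) (hf.comp (measurable_snoc h))
    simp_rw [hkernel]
    rw [lintegral_withDensity_eq_lintegral_mul _ (hL n) hinner]
    refine lintegral_congr fun h => ?_
    simp_rw [Pi.mul_apply, histLikelihood_snoc, mul_assoc]
    exact (lintegral_const_mul _ ((hr _).mul (hf.comp (measurable_snoc h)))).symm

end histLikelihood

noncomputable def gaussianTilt (m ε : ℝ) (v : ℝ≥0) (x : ℝ) : ℝ≥0∞ :=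
  ENNReal.ofReal (Real.exp (ε * (x - m) / v - ε ^ 2 / (2 * v)))

section gaussianTilt

variable (m ε : ℝ) (v : ℝ≥0)

lemma measurable_gaussianTilt : Measurable (gaussianTilt m ε v) := by
  unfold gaussianTilt; fun_prop

lemma gaussianTilt_mul_gaussianTilt_neg (x : ℝ) :
    gaussianTilt m ε v x * gaussianTilt m (-ε) v x = ENNReal.ofReal (Real.exp (-ε ^ 2 / v)) := by
  rw [gaussianTilt, gaussianTilt, ← ENNReal.ofReal_mul (Real.exp_nonneg _), ← Real.exp_add]
  congr 2
  ring

lemma gaussianReal_add_eq_withDensity (hv : v ≠ 0) :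
    gaussianReal (m + ε) v = (gaussianReal m v).withDensity (gaussianTilt m ε v) := by
  rw [gaussianReal_of_var_ne_zero _ hv, gaussianReal_of_var_ne_zero _ hv,
    ← withDensity_mul _ (measurable_gaussianPDF m v) (measurable_gaussianTilt m ε v)]
  congr 1
  funext x
  have hv' : (v : ℝ) ≠ 0 := NNReal.coe_ne_zero.2 hv
  rw [Pi.mul_apply, gaussianPDF, gaussianPDF, gaussianTilt,
    ← ENNReal.ofReal_mul (gaussianPDFReal_nonneg m v x), gaussianPDFReal, gaussianPDFReal,
    mul_assoc _ (Real.exp _), ← Real.exp_add]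
  congr 3
  field_simp
  ring

end gaussianTilt

section TwoPoint

variable {α : Type*} [MeasurableSpace α] {P : Measure α} [IsProbabilityMeasure P]
  {f g : α → ℝ≥0∞} {c : ℝ≥0∞}

lemma le_two_mul_lintegral_min (hf : Measurable f) (hg : Measurable g)
    (hf1 : ∫⁻ y, f y ∂P = 1) (hg1 : ∫⁻ y, g y ∂P = 1) (hc : ∀ y, c ≤ f y * g y) :
    c ≤ 2 * ∫⁻ y, min (f y) (g y) ∂P := by
  have hhalf : (0 : ℝ) < 1 / 2 := by norm_num
  have hsq : ∀ x : ℝ≥0∞, (x ^ (1 / 2 : ℝ)) ^ (2 : ℝ) = x := fun x => by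
    rw [← ENNReal.rpow_mul]; norm_num
  -- `c ≤ f g = min f g * max f g ≤ min f g * (f + g)`, then Cauchy–Schwarz.
  have hpt : ∀ y, c ^ (1 / 2 : ℝ) ≤ min (f y) (g y) ^ (1 / 2 : ℝ) * (f y + g y) ^ (1 / 2 : ℝ) := by
    intro y
    rw [← ENNReal.mul_rpow_of_nonneg _ _ hhalf.le]
    refine ENNReal.rpow_le_rpow ((hc y).trans ?_) hhalf.le
    rw [← min_mul_max (f y) (g y)]
    gcongr
    exact max_le le_self_add le_add_self
  have hsum : ∫⁻ y, f y + g y ∂P = 2 := by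
    rw [lintegral_add_left hf, hf1, hg1, one_add_one_eq_two]
  have hCS := ENNReal.lintegral_mul_le_Lp_mul_Lq P Real.HolderConjugate.two_two
    ((hf.min hg).pow_const (1 / 2 : ℝ)).aemeasurable
    ((hf.add hg).pow_const (1 / 2 : ℝ)).aemeasurable
  simp only [Pi.mul_apply, Pi.add_apply, hsq, hsum] at hCS
  rw [← ENNReal.rpow_le_rpow_iff hhalf, mul_comm, ENNReal.mul_rpow_of_nonneg _ _ hhalf.le]
  calc c ^ (1 / 2 : ℝ) = ∫⁻ _, c ^ (1 / 2 : ℝ) ∂P := by simp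
    _ ≤ _ := lintegral_mono hpt
    _ ≤ _ := hCS
    _ = _ := by norm_num

lemma le_withDensity_or_le_withDensity_compl (hf : Measurable f) (hg : Measurable g)
    (hf1 : ∫⁻ y, f y ∂P = 1) (hg1 : ∫⁻ y, g y ∂P = 1) (hc : ∀ y, c ≤ f y * g y)
    {A : Set α} (hA : MeasurableSet A) :
    c / 4 ≤ P.withDensity f A ∨ c / 4 ≤ P.withDensity g Aᶜ := by
  rw [withDensity_apply _ hA, withDensity_apply _ hA.compl]
  by_contra! hlt
  have hmin : ∫⁻ y, min (f y) (g y) ∂P ≤ ∫⁻ y in A, f y ∂P + ∫⁻ y in Aᶜ, g y ∂P := by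
    rw [← lintegral_add_compl _ hA]
    gcongr <;> simp
  have : c < c := calc
    c ≤ 2 * ∫⁻ y, min (f y) (g y) ∂P := le_two_mul_lintegral_min hf hg hf1 hg1 hc
    _ ≤ 2 * (∫⁻ y in A, f y ∂P + ∫⁻ y in Aᶜ, g y ∂P) := by gcongr
    _ < 2 * (c / 4 + c / 4) :=
      (ENNReal.mul_lt_mul_iff_right two_ne_zero ENNReal.ofNat_ne_top).2
        (ENNReal.add_lt_add hlt.1 hlt.2)
    _ = c := by
      rw [← two_mul, ← mul_assoc, show (2 : ℝ≥0∞) * 2 = 4 by norm_num,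
        ENNReal.mul_div_cancel (by norm_num) (by norm_num)]
  exact lt_irrefl c this

end TwoPoint

section Flip

open Function OrderDual

variable {ι β : Type*} [LinearOrder ι] [LinearOrder β] {m : ι → β}

lemma Monotone.update_of_le_of_le (hm : Monotone m) {j : ι} {b : β}
    (hlt : ∀ k < j, m k ≤ b) (hgt : ∀ k, j < k → b ≤ m k) : Monotone (update m j b) := by
  intro k l hkl
  rcases hkl.eq_or_lt with rfl | hkl
  · exact le_rfl
  rcases eq_or_ne k j with rfl | hk
  · simpa [update_of_ne hkl.ne'] using hgt l hkl
  rcases eq_or_ne l j with rfl | hl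
  · simpa [update_of_ne hk] using hlt k hkl
  · simpa [update_of_ne hk, update_of_ne hl] using hm hkl.le

lemma Monotone.exists_update_eq_of_gap [Finite ι] (hm : Monotone m) {a b : β} (hab : a ≤ b)
    (hgap : ∀ k, m k ≤ a ∨ b ≤ m k) (ha : ∃ k, m k = a) :
    ∃ j, m j = a ∧ Monotone (update m j b) := by
  obtain ⟨j, hj, hmax⟩ := (Set.toFinite {k | m k = a}).exists_maximal ha
  refine ⟨j, hj, hm.update_of_le_of_le (fun k hk => (hm hk.le).trans (hj ▸ hab)) fun k hk => ?_⟩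
  refine (hgap k).resolve_left fun hka => hk.not_ge (hmax (le_antisymm hka ?_) hk.le)
  exact hj ▸ hm hk.le

lemma Monotone.exists_update_eq_of_gap' [Finite ι] (hm : Monotone m) {a b : β} (hab : a ≤ b)
    (hgap : ∀ k, m k ≤ a ∨ b ≤ m k) (hb : ∃ k, m k = b) :
    ∃ j, m j = b ∧ Monotone (update m j a) := by
  obtain ⟨j, hj, hmono⟩ := Monotone.exists_update_eq_of_gap (ι := ιᵒᵈ) (β := βᵒᵈ)
    (m := toDual ∘ m ∘ ofDual) hm.dual (a := toDual b) (b := toDual a) hab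
    (fun k => (hgap k).symm) hb
  exact ⟨j, hj, fun k l hkl => hmono (toDual_le_toDual.2 hkl)⟩

lemma exists_minimal_gap_update [Finite ι] [Nonempty ι] {m : ι → ℝ} (hm : Monotone m)
    {τ : ℝ} {Δ : ι → ℝ} (hgap : ∀ k, |m k - τ| = Δ k) :
    ∃ j, (∀ k, Δ j ≤ Δ k) ∧ Monotone (update m j (τ + Δ j)) ∧
      Monotone (update m j (τ - Δ j)) := by
  obtain ⟨j₀, hj₀⟩ := Finite.exists_min Δ
  have hδ : 0 ≤ Δ j₀ := hgap j₀ ▸ abs_nonneg _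
  have hsep : ∀ k, m k ≤ τ - Δ j₀ ∨ τ + Δ j₀ ≤ m k := fun k => by
    rcases le_abs'.1 ((hj₀ k).trans_eq (hgap k).symm) with h | h
    exacts [.inl (by linarith), .inr (by linarith)]
  rcases (abs_eq hδ).1 (hgap j₀) with h | h
  · obtain ⟨j, hj, hmono⟩ := hm.exists_update_eq_of_gap' (by linarith) hsep ⟨j₀, by linarith⟩
    have hΔj : Δ j = Δ j₀ := by rw [← hgap j, hj, add_sub_cancel_left, abs_of_nonneg hδ]
    refine ⟨j, by rwa [hΔj], ?_, by rwa [hΔj]⟩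
    rw [hΔj, ← hj, update_eq_self]
    exact hm
  · obtain ⟨j, hj, hmono⟩ := hm.exists_update_eq_of_gap (by linarith) hsep ⟨j₀, by linarith⟩
    have hΔj : Δ j = Δ j₀ := by rw [← hgap j, hj, sub_sub_cancel_left, abs_neg, abs_of_nonneg hδ]
    refine ⟨j, by rwa [hΔj], by rwa [hΔj], ?_⟩
    rw [hΔj, ← hj, update_eq_self]
    exact hm

end Flip

section GaussianFlip

open Function

variable {K : ℕ}

lemma abs_update_sub_eq {m : Fin K → ℝ} {τ : ℝ} {Δ : Fin K → ℝ} (hgap : ∀ k, |m k - τ| = Δ k)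
    {j : Fin K} {b : ℝ} (hb : |b - τ| = Δ j) (k : Fin K) : |update m j b k - τ| = Δ k := by
  rcases eq_or_ne k j with rfl | hk
  · rwa [update_self]
  · rw [update_of_ne hk, hgap k]

noncomputable def armTilt (j : Fin K) (τ ε : ℝ) (v : ℝ≥0) : Fin K → ℝ → ℝ≥0∞ :=
  update 1 j (gaussianTilt τ ε v)

lemma gaussianReal_update_eq_withDensity (m : Fin K → ℝ) (j : Fin K) (τ ε : ℝ) {v : ℝ≥0}
    (hv : v ≠ 0) (k : Fin K) :
    gaussianReal (update m j (τ + ε) k) v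
      = (gaussianReal (update m j τ k) v).withDensity (armTilt j τ ε v k) := by
  rcases eq_or_ne k j with rfl | hk
  · simp only [armTilt, update_self, gaussianReal_add_eq_withDensity τ ε v hv]
  · simp only [armTilt, update_of_ne hk, Pi.one_apply, withDensity_one]

lemma measurable_armTilt (j : Fin K) (τ ε : ℝ) (v : ℝ≥0) (k : Fin K) :
    Measurable (armTilt j τ ε v k) := by
  rcases eq_or_ne k j with rfl | hk
  · simpa [armTilt] using measurable_gaussianTilt τ ε v
  · simpa [armTilt, update_of_ne hk] using measurable_one

lemma setOf_eq_false_subset_errSet {T : ℕ} {Qhat : (Fin T → ℝ) → Fin K → Bool} {μ : Fin K → ℝ}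
    {τ : ℝ} {j : Fin K} (h : τ ≤ μ j) : {y | Qhat y j = false} ⊆ errSet Qhat μ τ :=
  fun y hy => ⟨j, by simp_all⟩

lemma compl_setOf_eq_false_subset_errSet {T : ℕ} {Qhat : (Fin T → ℝ) → Fin K → Bool}
    {μ : Fin K → ℝ} {τ : ℝ} {j : Fin K} (h : μ j < τ) :
    {y | Qhat y j = false}ᶜ ⊆ errSet Qhat μ τ :=
  fun y hy => ⟨j, by simp_all⟩

lemma exp_le_armTilt_mul_armTilt_neg (j : Fin K) (τ ε : ℝ) (v : ℝ≥0) (k : Fin K) (x : ℝ) :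
    ENNReal.ofReal (Real.exp (-ε ^ 2 / v)) ≤ armTilt j τ ε v k x * armTilt j τ (-ε) v k x := by
  rcases eq_or_ne k j with rfl | hk
  · simp [armTilt, gaussianTilt_mul_gaussianTilt_neg]
  · simp only [armTilt, update_of_ne hk, Pi.one_apply, mul_one]
    exact ENNReal.ofReal_le_one.2 (Real.exp_le_one_iff.2
      (div_nonpos_of_nonpos_of_nonneg (neg_nonpos.2 (sq_nonneg ε)) v.2))

lemma exp_div_four_le_histMeasure_errSet_update {T : ℕ} (π : (t : ℕ) → (Fin t → ℝ) → Fin K)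
    (hπ : ∀ t, Measurable (π t)) (Qhat : (Fin T → ℝ) → Fin K → Bool) (hQhat : Measurable Qhat)
    (m : Fin K → ℝ) (j : Fin K) (τ : ℝ) {ε : ℝ} (hε : 0 < ε) {v : ℝ≥0} (hv : v ≠ 0) :
    ENNReal.ofReal (Real.exp (-T * ε ^ 2 / v)) / 4
        ≤ histMeasure (fun k => gaussianReal (update m j (τ + ε) k) v) π T
          (errSet Qhat (update m j (τ + ε)) τ) ∨
      ENNReal.ofReal (Real.exp (-T * ε ^ 2 / v)) / 4
        ≤ histMeasure (fun k => gaussianReal (update m j (τ - ε) k) v) π T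
          (errSet Qhat (update m j (τ - ε)) τ) := by
  set P := histMeasure (fun k => gaussianReal (update m j τ k) v) π T
  have : IsProbabilityMeasure P := isProbabilityMeasure_histMeasure _ hπ T
  have hhist : ∀ s, histMeasure (fun k => gaussianReal (update m j (τ + s) k) v) π T
      = P.withDensity (histLikelihood (armTilt j τ s v) π T) := fun s => by
    simp_rw [gaussianReal_update_eq_withDensity m j τ s hv]
    exact histMeasure_withDensity _ hπ _ (measurable_armTilt j τ s v) T
  have hL := fun s => measurable_histLikelihood _ hπ (measurable_armTilt j τ s v) T
  have hL1 : ∀ s, ∫⁻ y, histLikelihood (armTilt j τ s v) π T y ∂P = 1 := fun s => by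
    have := isProbabilityMeasure_histMeasure
      (fun k => gaussianReal (update m j (τ + s) k) v) hπ T
    rw [hhist, isProbabilityMeasure_iff, withDensity_apply _ .univ, Measure.restrict_univ] at this
    exact this
  have hc : ∀ y, ENNReal.ofReal (Real.exp (-T * ε ^ 2 / v))
      ≤ histLikelihood (armTilt j τ ε v) π T y * histLikelihood (armTilt j τ (-ε) v) π T y := by
    intro y
    convert pow_le_histLikelihood_mul _ π (exp_le_armTilt_mul_armTilt_neg j τ ε v) T y using 1
    rw [← ENNReal.ofReal_pow (Real.exp_nonneg _), ← Real.exp_nat_mul]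
    ring_nf
  have hA : MeasurableSet {y | Qhat y j = false} :=
    (measurable_pi_apply j).comp hQhat (measurableSet_singleton false)
  rw [sub_eq_add_neg, hhist, hhist]
  refine (le_withDensity_or_le_withDensity_compl (hL ε) (hL (-ε)) (hL1 ε) (hL1 (-ε)) hc hA).imp
    (fun h => h.trans (measure_mono (setOf_eq_false_subset_errSet ?_)))
    (fun h => h.trans (measure_mono (compl_setOf_eq_false_subset_errSet ?_))) <;>
  simp [hε, hε.le]

end GaussianFlip

theorem monotone_lower_bound
    (K T : ℕ) (hK : 3 ≤ K) (σ τ : ℝ) (hσ : 0 < σ)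
    (Δ : Fin K → ℝ) (hΔ : ∀ k, 0 < Δ k)
    (hfeas : ∃ m : Fin K → ℝ, Monotone m ∧ ∀ k, |m k - τ| = Δ k)
    (π : (t : ℕ) → (Fin t → ℝ) → Fin K) (hπ : ∀ t, Measurable (π t))
    (Qhat : (Fin T → ℝ) → Fin K → Bool) (hQhat : Measurable Qhat) :
    ∃ μ : Fin K → ℝ, Monotone μ ∧ (∀ k, |μ k - τ| = Δ k) ∧
      ENNReal.ofReal ((1 / 4) * Real.exp (-(T : ℝ) * (⨅ k, Δ k) ^ 2 / σ ^ 2)) ≤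
        histMeasure (fun k => gaussianReal (μ k) ⟨σ ^ 2, sq_nonneg σ⟩) π T
          (errSet Qhat μ τ) := by
  obtain ⟨m, hm, hgap⟩ := hfeas
  have : Nonempty (Fin K) := ⟨⟨0, by omega⟩⟩
  obtain ⟨j, hjmin, hmono_add, hmono_sub⟩ := exists_minimal_gap_update hm hgap
  have hinf : ⨅ k, Δ k = Δ j :=
    le_antisymm (ciInf_le (Set.finite_range Δ).bddBelow j) (le_ciInf hjmin)
  have hv : (⟨σ ^ 2, sq_nonneg σ⟩ : ℝ≥0) ≠ 0 := fun h =>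
    (pow_pos hσ 2).ne' (congrArg NNReal.toReal h)
  have hbound : ENNReal.ofReal ((1 / 4) * Real.exp (-(T : ℝ) * (⨅ k, Δ k) ^ 2 / σ ^ 2))
      = ENNReal.ofReal (Real.exp (-T * Δ j ^ 2 / σ ^ 2)) / 4 := by
    rw [hinf, mul_comm, ENNReal.ofReal_mul (Real.exp_nonneg _), one_div,
      ENNReal.ofReal_inv_of_pos (by norm_num), ENNReal.ofReal_ofNat]
    exact (div_eq_mul_inv _ _).symm
  rw [hbound]
  rcases exp_div_four_le_histMeasure_errSet_update π hπ Qhat hQhat m j τ (hΔ j) hv with h | h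
  · exact ⟨_, hmono_add, abs_update_sub_eq hgap (by simp [(hΔ j).le]), h⟩
  · exact ⟨_, hmono_sub, abs_update_sub_eq hgap (by simp [(hΔ j).le]), h⟩
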